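/- Let m ≥ 5 and n ≥ 2 be integers, and suppose c is a locating (m+1)-coloring of K_m □ P_n. Then any two distinct columns have different missing colors; that is, for all j ≠ j', there is no color absent from both column j and column j'. -/

import Mathlib

open SimpleGraph

/-- The distance from a vertex to a set of vertices. -/
noncomputable def setDist {V : Type*} (G : SimpleGraph V) (v : V) (S : Set V) : ℕ :=
  sInf (G.dist v '' S)

/-- The color code of a vertex with respect to a `k`-coloring `c`:
the tuple of distances to the color classes. -/
noncomputable def colorCode {V : Type*} (G : SimpleGraph V) {k : ℕ} (c : V → Fin k)
    (v : V) : Fin k → ℕ :=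
  fun i => setDist G v (c ⁻¹' {i})

/-- `c` is a locating `k`-coloring of `G`: a proper coloring onto the `k` colors
such that distinct vertices have distinct color codes. -/
def IsLocatingColoring {V : Type*} (G : SimpleGraph V) {k : ℕ} (c : V → Fin k) : Prop :=
  Function.Surjective c ∧
  (∀ u v : V, G.Adj u v → c u ≠ c v) ∧
  Function.Injective (colorCode G c)

/-- The locating chromatic number: the least `k` admitting a locating `k`-coloring. -/
noncomputable def locatingChromaticNumber {V : Type*} (G : SimpleGraph V) : ℕ :=
  sInf {k : ℕ | ∃ c : V → Fin k, IsLocatingColoring G c}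

/-- A vertex is colorful w.r.t. a coloring `c` if every color appears in its
closed neighborhood. -/
def IsColorful {V : Type*} (G : SimpleGraph V) {k : ℕ} (c : V → Fin k) (v : V) : Prop :=
  ∀ i : Fin k, ∃ u : V, (u = v ∨ G.Adj v u) ∧ c u = i

/-!
Let `X` be the class of the color `x` and `D(t)` the distance from column `t` to the nearest
column meeting `X`. In a column `t` missing `x` every other color occurs, so the code of a vertex
there consists of `0` at its own color, `1` at every other color except `x`, and its distance to
`X`, which is `D(t)` or `D(t) + 1`; the value `D(t)` occurs in at most two rows, since `X` meets
each column at most once. So if two columns missing `x` had the same `D`, then, as `m ≥ 5`, some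
color would lie at distance `D + 1` in both, and its two vertices would share a code. Adjacent
columns missing `x` would have `D` equal or differing by one, and the latter is excluded by a
similar code argument. Hence every column missing `x` has a neighbouring column containing `x`,
i.e. `D = 1`, and two such columns would have the same `D`.
-/

open Finset

namespace SimpleGraph

theorem Walk.natDist_le_length {n : ℕ} {u v : Fin n} (w : (pathGraph n).Walk u v) :
    Nat.dist u v ≤ w.length := by
  induction w with
  | nil => simp
  | cons h _ ih =>
    rw [pathGraph_adj] at h
    rw [Walk.length_cons]
    unfold Nat.dist at *
    omega

theorem pathGraph_dist_le_natDist {n : ℕ} (u v : Fin n) :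
    (pathGraph n).dist u v ≤ Nat.dist u v := by
  wlog huv : u ≤ v generalizing u v
  · rw [dist_comm, Nat.dist_comm]
    exact this v u (le_of_not_ge huv)
  obtain ⟨k, hk⟩ := Nat.exists_eq_add_of_le huv
  induction k generalizing v with
  | zero => simp [Fin.ext hk]
  | succ k ih =>
    let w : Fin n := ⟨u + k, by omega⟩
    have hw : (pathGraph n).Adj w v := pathGraph_adj.mpr (.inl hk.symm)
    calc (pathGraph n).dist u v ≤ (pathGraph n).dist u w + (pathGraph n).dist w v :=
          hw.reachable.dist_triangle_right u
      _ ≤ Nat.dist u w + 1 := by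
          gcongr
          · exact ih w (Fin.le_iff_val_le_val.mpr (by simp [w])) rfl
          · exact (dist_eq_one_iff_adj.mpr hw).le
      _ ≤ Nat.dist u v := by unfold Nat.dist; simp only [w]; omega

theorem pathGraph_dist {n : ℕ} (u v : Fin n) : (pathGraph n).dist u v = Nat.dist u v := by
  refine le_antisymm (pathGraph_dist_le_natDist u v) ?_
  obtain ⟨w, hw⟩ := (pathGraph_preconnected n u v).exists_walk_length_eq_dist
  exact hw ▸ w.natDist_le_length

theorem dist_boxProd {α β : Type*} {G : SimpleGraph α} {H : SimpleGraph β} {x y : α × β}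
    (hG : G.Reachable x.1 y.1) (hH : H.Reachable x.2 y.2) :
    (G □ H).dist x y = G.dist x.1 y.1 + H.dist x.2 y.2 := by
  rw [dist, edist_boxProd, ENat.toNat_add (edist_ne_top_iff_reachable.mpr hG)
    (edist_ne_top_iff_reachable.mpr hH), dist, dist]

end SimpleGraph

section SetDist

variable {V : Type*} (G : SimpleGraph V) {u v : V} {S : Set V}

theorem setDist_le_dist (hu : u ∈ S) : setDist G v S ≤ G.dist v u :=
  Nat.sInf_le ⟨u, hu, rfl⟩

theorem exists_mem_dist_eq_setDist (hS : S.Nonempty) (v : V) :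
    ∃ u ∈ S, G.dist v u = setDist G v S :=
  Nat.sInf_mem (hS.image (G.dist v))

theorem setDist_eq_zero_of_mem (hv : v ∈ S) : setDist G v S = 0 :=
  Nat.le_zero.mp ((setDist_le_dist G hv).trans_eq dist_self)

theorem setDist_eq_one {G} (hG : G.Connected) (hv : v ∉ S) (hu : u ∈ S) (hvu : G.Adj v u) :
    setDist G v S = 1 := by
  refine le_antisymm ((setDist_le_dist G hu).trans_eq (dist_eq_one_iff_adj.mpr hvu)) ?_
  obtain ⟨w, hw, hdist⟩ := exists_mem_dist_eq_setDist G ⟨u, hu⟩ v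
  exact hdist ▸ hG.pos_dist_of_ne (ne_of_mem_of_not_mem hw hv).symm

end SetDist

/-- `K_m □ P_n`; the first coordinate is the row, the second the column. -/
abbrev completeBoxPath (m n : ℕ) : SimpleGraph (Fin m × Fin n) :=
  (⊤ : SimpleGraph (Fin m)) □ pathGraph n

namespace completeBoxPath

variable {m n : ℕ}

theorem connected (hm : 0 < m) (hn : 0 < n) : (completeBoxPath m n).Connected := by
  have : Nonempty (Fin m) := ⟨⟨0, hm⟩⟩
  obtain ⟨n, rfl⟩ := Nat.exists_eq_succ_of_ne_zero hn.ne'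
  exact connected_top.boxProd (pathGraph_connected n)

theorem dist_eq (u v : Fin m × Fin n) :
    (completeBoxPath m n).dist u v = (if u.1 = v.1 then 0 else 1) + Nat.dist u.2 v.2 := by
  have : Nonempty (Fin m) := ⟨u.1⟩
  rw [dist_boxProd (connected_top.preconnected _ _) (pathGraph_preconnected n _ _), dist_top,
    pathGraph_dist]

theorem adj_of_row_ne {i i' : Fin m} (h : i ≠ i') (t : Fin n) :
    (completeBoxPath m n).Adj (i, t) (i', t) :=
  boxProd_adj_left.mpr ((top_adj _ _).mpr h)

theorem adj_of_natDist_eq_one (i : Fin m) {s s' : Fin n} (h : Nat.dist s s' = 1) :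
    (completeBoxPath m n).Adj (i, s) (i, s') :=
  boxProd_adj_right.mpr (pathGraph_adj.mpr (by unfold Nat.dist at h; omega))

end completeBoxPath

section ColDist

variable {m n : ℕ} (S : Set (Fin m × Fin n))

noncomputable def colDist (t : Fin n) : ℕ :=
  sInf ((fun u : Fin m × Fin n => Nat.dist t u.2) '' S)

theorem colDist_le {t : Fin n} {u : Fin m × Fin n} (hu : u ∈ S) :
    colDist S t ≤ Nat.dist t u.2 :=
  Nat.sInf_le ⟨u, hu, rfl⟩

theorem exists_mem_natDist_eq_colDist (hS : S.Nonempty) (t : Fin n) :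
    ∃ u ∈ S, Nat.dist t u.2 = colDist S t :=
  Nat.sInf_mem (hS.image _)

theorem colDist_le_colDist_add_natDist (hS : S.Nonempty) (t t' : Fin n) :
    colDist S t ≤ colDist S t' + Nat.dist t t' := by
  obtain ⟨u, hu, hd⟩ := exists_mem_natDist_eq_colDist S hS t'
  have := colDist_le S (t := t) hu
  unfold Nat.dist at *
  omega

theorem colDist_pos (hS : S.Nonempty) {t : Fin n} (ht : ∀ i, (i, t) ∉ S) :
    0 < colDist S t := by
  obtain ⟨⟨i, q⟩, hu, hd⟩ := exists_mem_natDist_eq_colDist S hS t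
  refine Nat.pos_of_ne_zero fun h0 => ht i ?_
  obtain rfl : q = t := Fin.ext (by dsimp only at hd; unfold Nat.dist at hd; omega)
  exact hu

end ColDist

namespace completeBoxPath

variable {m n : ℕ} {S : Set (Fin m × Fin n)}

theorem colDist_le_setDist (hS : S.Nonempty) (i : Fin m) (t : Fin n) :
    colDist S t ≤ setDist (completeBoxPath m n) (i, t) S := by
  obtain ⟨u, hu, hd⟩ := exists_mem_dist_eq_setDist _ hS (i, t)
  rw [← hd, dist_eq]
  exact (colDist_le S hu).trans (Nat.le_add_left _ _)

theorem setDist_le_colDist_add_one (hS : S.Nonempty) (i : Fin m) (t : Fin n) :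
    setDist (completeBoxPath m n) (i, t) S ≤ colDist S t + 1 := by
  obtain ⟨u, hu, hd⟩ := exists_mem_natDist_eq_colDist S hS t
  calc setDist (completeBoxPath m n) (i, t) S ≤ (completeBoxPath m n).dist (i, t) u :=
        setDist_le_dist _ hu
    _ ≤ colDist S t + 1 := by rw [dist_eq, hd]; split <;> omega

theorem exists_mem_of_setDist_eq_colDist (hS : S.Nonempty) {i : Fin m} {t : Fin n}
    (h : setDist (completeBoxPath m n) (i, t) S = colDist S t) :
    ∃ q, (i, q) ∈ S ∧ Nat.dist t q = colDist S t := by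
  obtain ⟨⟨i', q⟩, hu, hd⟩ := exists_mem_dist_eq_setDist _ hS (i, t)
  rw [h, dist_eq] at hd
  have hle := colDist_le S (t := t) hu
  dsimp only at hd hle
  by_cases hi : i = i'
  · subst hi
    exact ⟨q, hu, by simpa using hd⟩
  · rw [if_neg hi] at hd
    omega

/-- The rows counted here meet `S` in the columns `t ± colDist S t`. -/
theorem card_setDist_eq_colDist_le_two (hS : S.Nonempty)
    (hcol : ∀ i i' q, (i, q) ∈ S → (i', q) ∈ S → i = i') (t : Fin n) :
    #{i | setDist (completeBoxPath m n) (i, t) S = colDist S t} ≤ 2 := by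
  classical
  set D := colDist S t
  let Q : Finset (Fin n) := {q | Nat.dist t q = D}
  have hQ : #Q ≤ 2 := by
    refine (card_le_card_of_injOn Fin.val (t := {t.val - D, t.val + D}) ?_
      Fin.val_injective.injOn).trans card_le_two
    intro q hq
    simp only [Q, coe_filter, mem_univ, true_and, Set.mem_ofPred_eq] at hq
    unfold Nat.dist at hq
    simp only [coe_insert, coe_singleton, Set.mem_insert_iff, Set.mem_singleton_iff]
    omega
  calc #{i | setDist (completeBoxPath m n) (i, t) S = D}
      ≤ #(Q.biUnion fun q => {i | (i, q) ∈ S}) := by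
        refine card_le_card fun i hi => ?_
        obtain ⟨q, hq, hd⟩ := exists_mem_of_setDist_eq_colDist hS (mem_filter.mp hi).2
        exact mem_biUnion.mpr ⟨q, mem_filter.mpr ⟨mem_univ q, hd⟩, mem_filter.mpr ⟨mem_univ i, hq⟩⟩
    _ ≤ #Q * 1 := card_biUnion_le_card_mul _ _ _ fun q _ => card_le_one.mpr
        fun i hi i' hi' => hcol i i' q (mem_filter.mp hi).2 (mem_filter.mp hi').2
    _ ≤ 2 := by omega

theorem row_eq_of_color_eq {α : Type*} {c : Fin m × Fin n → α}
    (hc : ∀ u v, (completeBoxPath m n).Adj u v → c u ≠ c v) {i i' : Fin m} {t : Fin n}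
    (h : c (i, t) = c (i', t)) : i = i' :=
  by_contra fun hne => hc _ _ (adj_of_row_ne hne t) h

variable {c : Fin m × Fin n → Fin (m + 1)}
  (hc : ∀ u v, (completeBoxPath m n).Adj u v → c u ≠ c v)
include hc

theorem exists_row_eq_of_ne {x : Fin (m + 1)} {t : Fin n} (hx : ∀ i, c (i, t) ≠ x)
    {a : Fin (m + 1)} (ha : a ≠ x) : ∃ i, c (i, t) = a := by
  let f : Fin m → {b // b ≠ x} := fun i => ⟨c (i, t), hx i⟩
  have hf : f.Bijective := (Fintype.bijective_iff_injective_and_card f).mpr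
    ⟨fun i i' h => row_eq_of_color_eq hc (congrArg Subtype.val h), by simp⟩
  obtain ⟨i, hi⟩ := hf.2 ⟨a, ha⟩
  exact ⟨i, congrArg Subtype.val hi⟩

theorem setDist_eq_one_of_missing {x a : Fin (m + 1)} {i : Fin m} {t : Fin n}
    (hx : ∀ i, c (i, t) ≠ x) (hax : a ≠ x) (hai : a ≠ c (i, t)) :
    setDist (completeBoxPath m n) (i, t) (c ⁻¹' {a}) = 1 := by
  obtain ⟨i', hi'⟩ := exists_row_eq_of_ne hc hx hax
  refine setDist_eq_one (connected i.pos t.pos) (fun h => hai h.symm) hi' (adj_of_row_ne ?_ t)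
  rintro rfl
  exact hai hi'.symm

theorem colorCode_eq_of_missing {x : Fin (m + 1)} {i i' : Fin m} {t t' : Fin n}
    (hx : ∀ i, c (i, t) ≠ x) (hx' : ∀ i, c (i, t') ≠ x) (hcol : c (i, t) = c (i', t'))
    (hdist : setDist (completeBoxPath m n) (i, t) (c ⁻¹' {x}) =
      setDist (completeBoxPath m n) (i', t') (c ⁻¹' {x})) :
    colorCode (completeBoxPath m n) c (i, t) = colorCode (completeBoxPath m n) c (i', t') := by
  funext a
  by_cases hai : a = c (i, t)
  · rw [colorCode, colorCode, hai, hcol,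
      setDist_eq_zero_of_mem _ (show (i, t) ∈ c ⁻¹' {c (i', t')} from hcol),
      setDist_eq_zero_of_mem _ (show (i', t') ∈ c ⁻¹' {c (i', t')} from rfl)]
  by_cases hax : a = x
  · subst hax
    exact hdist
  rw [colorCode, colorCode, setDist_eq_one_of_missing hc hx hax hai,
    setDist_eq_one_of_missing hc hx' hax (hcol ▸ hai)]

variable (hinj : Function.Injective (colorCode (completeBoxPath m n) c))
  {x : Fin (m + 1)} (hX : (c ⁻¹' {x}).Nonempty)
include hinj hX

theorem colDist_ne_of_missing (hm : 5 ≤ m) {t t' : Fin n} (htt' : t ≠ t')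
    (hx : ∀ i, c (i, t) ≠ x) (hx' : ∀ i, c (i, t') ≠ x) :
    colDist (c ⁻¹' {x}) t ≠ colDist (c ⁻¹' {x}) t' := by
  intro hD
  set X := c ⁻¹' {x}
  have hXcol : ∀ i i' q, (i, q) ∈ X → (i', q) ∈ X → i = i' := fun i i' q hi hi' =>
    row_eq_of_color_eq hc (hi.trans hi'.symm)
  let nearColors (s : Fin n) : Finset (Fin (m + 1)) :=
    ({i | setDist (completeBoxPath m n) (i, s) X = colDist X s} : Finset (Fin m)).image
      fun i => c (i, s)
  have hcard : #(nearColors t ∪ nearColors t') < #(univ.erase x) := by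
    have := card_union_le (nearColors t) (nearColors t')
    have : #(nearColors t) ≤ 2 := card_image_le.trans (card_setDist_eq_colDist_le_two hX hXcol t)
    have : #(nearColors t') ≤ 2 :=
      card_image_le.trans (card_setDist_eq_colDist_le_two hX hXcol t')
    rw [card_erase_of_mem (mem_univ x), card_univ, Fintype.card_fin]
    omega
  obtain ⟨a, ha, hnear⟩ := exists_mem_notMem_of_card_lt_card hcard
  obtain ⟨i, hi⟩ := exists_row_eq_of_ne hc hx (ne_of_mem_erase ha)
  obtain ⟨i', hi'⟩ := exists_row_eq_of_ne hc hx' (ne_of_mem_erase ha)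
  have hfar : ∀ s j, a ∉ nearColors s → c (j, s) = a →
      setDist (completeBoxPath m n) (j, s) X = colDist X s + 1 := by
    intro s j hs hj
    have := colDist_le_setDist hX j s
    have := setDist_le_colDist_add_one hX j s
    have : setDist (completeBoxPath m n) (j, s) X ≠ colDist X s := fun h =>
      hs (mem_image.mpr ⟨j, mem_filter.mpr ⟨mem_univ j, h⟩, hj⟩)
    omega
  have hit := hfar t i (fun h => hnear (mem_union_left _ h)) hi
  have hit' := hfar t' i' (fun h => hnear (mem_union_right _ h)) hi'
  exact htt' (congrArg Prod.snd (hinj (colorCode_eq_of_missing hc hx hx' (hi.trans hi'.symm)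
    (by rw [hit, hit', hD]))))

/-- Let `(r, q)` realise `colDist` for column `s`. The color of `(r, s')` occurs in column `s`
in some row `i`: if `(i, s)` is at distance `colDist + 1` from `x` it shares its color code with
`(r, s')`, and otherwise its nearest `x` is `(r, q)` again, so `i = r`, and the coloring is not
proper. -/
theorem colDist_ne_succ_of_missing {s s' : Fin n} (hss' : Nat.dist s s' = 1)
    (hx : ∀ i, c (i, s) ≠ x) (hx' : ∀ i, c (i, s') ≠ x) :
    colDist (c ⁻¹' {x}) s' ≠ colDist (c ⁻¹' {x}) s + 1 := by
  intro hD
  set X := c ⁻¹' {x}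
  obtain ⟨⟨r, q⟩, hrq, hq⟩ := exists_mem_natDist_eq_colDist X hX s
  have hq' := colDist_le X (t := s') hrq
  dsimp only at hq hq'
  have hr : setDist (completeBoxPath m n) (r, s') X = colDist X s' := by
    refine le_antisymm ?_ (colDist_le_setDist hX r s')
    refine (setDist_le_dist _ hrq).trans_eq ?_
    rw [dist_eq]
    unfold Nat.dist at *
    simp only [if_true]
    omega
  obtain ⟨i, hi⟩ := exists_row_eq_of_ne hc hx (hx' r)
  have := colDist_le_setDist hX i s
  have := setDist_le_colDist_add_one hX i s
  obtain hnear | hfar : setDist (completeBoxPath m n) (i, s) X = colDist X s ∨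
      setDist (completeBoxPath m n) (i, s) X = colDist X s + 1 := by omega
  · obtain ⟨q', hq'X, hdq'⟩ := exists_mem_of_setDist_eq_colDist hX hnear
    have := colDist_le X (t := s') hq'X
    dsimp only at this
    obtain rfl : q' = q := Fin.ext (by unfold Nat.dist at *; omega)
    obtain rfl : i = r := row_eq_of_color_eq hc (hq'X.trans hrq.symm)
    exact hc _ _ (adj_of_natDist_eq_one i hss') hi
  · have hss : s = s' :=
      congrArg Prod.snd (hinj (colorCode_eq_of_missing hc hx hx' hi (by rw [hfar, hr, hD])))
    simp [hss] at hss'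

theorem exists_row_eq_of_missing_of_natDist_eq_one (hm : 5 ≤ m) {s s' : Fin n}
    (hss' : Nat.dist s s' = 1) (hx : ∀ i, c (i, s) ≠ x) : ∃ i, c (i, s') = x := by
  by_contra! hx'
  have := colDist_le_colDist_add_natDist _ hX s s'
  have := colDist_le_colDist_add_natDist _ hX s' s
  rw [Nat.dist_comm] at this
  rcases lt_trichotomy (colDist (c ⁻¹' {x}) s) (colDist (c ⁻¹' {x}) s') with hlt | heq | hgt
  · exact colDist_ne_succ_of_missing hc hinj hX hss' hx hx' (by omega)
  · exact colDist_ne_of_missing hc hinj hX hm (fun h => by simp [h] at hss') hx hx' heq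
  · exact colDist_ne_succ_of_missing hc hinj hX (by rwa [Nat.dist_comm]) hx' hx (by omega)

theorem colDist_eq_one_of_missing (hm : 5 ≤ m) (hn : 2 ≤ n) {t : Fin n}
    (hx : ∀ i, c (i, t) ≠ x) : colDist (c ⁻¹' {x}) t = 1 := by
  obtain ⟨t', htt'⟩ : ∃ t' : Fin n, Nat.dist t t' = 1 := by
    by_cases h : t.val + 1 < n
    · exact ⟨⟨t + 1, h⟩, by unfold Nat.dist; dsimp only; omega⟩
    · exact ⟨⟨t - 1, by omega⟩, by unfold Nat.dist; dsimp only; omega⟩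
  obtain ⟨i, hi⟩ := exists_row_eq_of_missing_of_natDist_eq_one hc hinj hX hm htt' hx
  have := colDist_le (c ⁻¹' {x}) (t := t) (u := (i, t')) hi
  dsimp only at this
  have := colDist_pos _ hX (t := t) hx
  omega

end completeBoxPath

/-- In any locating `(m+1)`-coloring of `K_m □ P_n` (`m ≥ 5`, `n ≥ 2`),
any two distinct columns have different missing colors. -/
theorem stmt6 (m n : ℕ) (hm : 5 ≤ m) (hn : 2 ≤ n)
    (c : Fin m × Fin n → Fin (m + 1))
    (hc : IsLocatingColoring ((⊤ : SimpleGraph (Fin m)) □ pathGraph n) c)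
    (j j' : Fin n) (hjj' : j ≠ j') :
    ¬ ∃ x : Fin (m + 1), (∀ i : Fin m, c (i, j) ≠ x) ∧ (∀ i : Fin m, c (i, j') ≠ x) := by
  rintro ⟨x, hj, hj'⟩
  obtain ⟨hsurj, hproper, hinj⟩ := hc
  have hX : (c ⁻¹' {x}).Nonempty := hsurj x
  open completeBoxPath in
  exact colDist_ne_of_missing hproper hinj hX hm hjj' hj hj'
    ((colDist_eq_one_of_missing hproper hinj hX hm hn hj).trans
      (colDist_eq_one_of_missing hproper hinj hX hm hn hj').symm)
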